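/- For Schwartz functions Ψ, Φ on ℝ², the L²-norm of the σ-star product satisfies ‖Ψ ⋆_σ Φ‖_{L²} ≤ (1/(2πħ)) ‖FΨ‖_{L¹} ‖Φ‖_{L²}, where F is the (ħ-normalized) Fourier transform. -/

import Mathlib

/-!
After replacing the prefactor and the phase by their moduli, `|Ψ ⋆_σ Φ|` is dominated pointwise by
`(1/(2πħ)) ∫ |FΨ(w)| |Φ(z - τ w)| dw` with `τ(ξ, η) = ((1-σ)η, σξ)`, a superposition of translates
of `|Φ|` weighted by `|FΨ|`. Cauchy–Schwarz with respect to the weight `|FΨ|`, Tonelli and the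
translation invariance of Lebesgue measure bound the `L²` norm of such a superposition by
`‖FΨ‖_{L¹} ‖Φ‖_{L²}`. All finiteness needed comes from `FΨ` being again a Schwartz function: up to
a linear change of variables it is the Fourier transform of `Ψ` viewed as a function on `ℂ`.
-/

open MeasureTheory Complex Real

/-- The `hbar`-normalized Fourier transform on the phase space `ℝ²`:
`Ff(ξ,η) = (1/(2πhbar)) ∬ f(x,p) e^{−(i/hbar)(ξx − ηp)} dx dp`. -/
noncomputable def FT (hbar : ℝ) (f : ℝ × ℝ → ℂ) : ℝ × ℝ → ℂ := fun w =>
  (1 / (2 * π * hbar) : ℂ) *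
    ∫ z : ℝ × ℝ, f z * Complex.exp (-(Complex.I / hbar) * (w.1 * z.1 - w.2 * z.2))

/-- The `σ`-star product on the phase space `ℝ²`, in its integral form:
`(f ⋆_σ g)(x,p) = (1/(2πhbar)) ∬ Ff(ξ,η) g(x − (1−σ)η, p − σξ) e^{(i/hbar)(ξx − ηp)} dξ dη`. -/
noncomputable def starProd (hbar σ : ℝ) (f g : ℝ × ℝ → ℂ) : ℝ × ℝ → ℂ := fun z =>
  (1 / (2 * π * hbar) : ℂ) *
    ∫ w : ℝ × ℝ, FT hbar f w * g (z.1 - (1 - σ) * w.2, z.2 - σ * w.1) *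
      Complex.exp ((Complex.I / hbar) * (w.1 * z.1 - w.2 * z.2))

open scoped FourierTransform ENNReal ComplexConjugate

section WeightedTranslates

variable {α : Type*} [MeasurableSpace α] {μ : Measure α}

theorem lintegral_mul_sq_le_lintegral_mul_lintegral_mul_sq {f g : α → ℝ≥0∞}
    (hf : AEMeasurable f μ) (hg : AEMeasurable g μ) :
    (∫⁻ a, f a * g a ∂μ) ^ 2 ≤ (∫⁻ a, f a ∂μ) * ∫⁻ a, f a * g a ^ 2 ∂μ := by
  have hsqrt : ∀ x : ℝ≥0∞, (x ^ (1 / 2 : ℝ)) ^ 2 = x := fun x => by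
    simpa using ENNReal.rpow_inv_natCast_pow two_ne_zero x
  have hHolder := ENNReal.lintegral_mul_le_Lp_mul_Lq μ Real.HolderConjugate.two_two
    (hf.pow_const (1 / 2 : ℝ)) ((hf.pow_const (1 / 2 : ℝ)).mul hg)
  simp only [Pi.mul_apply, ← mul_assoc, ENNReal.rpow_two, mul_pow, hsqrt, ← sq] at hHolder
  calc (∫⁻ a, f a * g a ∂μ) ^ 2
      ≤ ((∫⁻ a, f a ∂μ) ^ (1 / 2 : ℝ) * (∫⁻ a, f a * g a ^ 2 ∂μ) ^ (1 / 2 : ℝ)) ^ 2 := by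
        gcongr
    _ = (∫⁻ a, f a ∂μ) * ∫⁻ a, f a * g a ^ 2 ∂μ := by rw [mul_pow, hsqrt, hsqrt]

variable {G : Type*} [MeasurableSpace G] [AddGroup G] [MeasurableAdd₂ G] [MeasurableNeg G]
  {ν : Measure G} [SFinite μ] [SFinite ν] [ν.IsAddRightInvariant] {f : α → ℝ≥0∞} {τ : α → G}

theorem lintegral_lintegral_mul_comp_sub_eq {h : G → ℝ≥0∞} (hf : Measurable f)
    (hh : Measurable h) (hτ : Measurable τ) :
    ∫⁻ z, ∫⁻ w, f w * h (z - τ w) ∂μ ∂ν = (∫⁻ w, f w ∂μ) * ∫⁻ z, h z ∂ν := by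
  rw [lintegral_lintegral_swap (by fun_prop)]
  have translate (w : α) : ∫⁻ z, f w * h (z - τ w) ∂ν = f w * ∫⁻ z, h z ∂ν := by
    rw [lintegral_const_mul _ (by fun_prop), lintegral_sub_right_eq_self]
  simp_rw [translate]
  exact lintegral_mul_const _ hf

theorem lintegral_sq_lintegral_mul_comp_sub_le {g : G → ℝ≥0∞} (hf : Measurable f)
    (hg : Measurable g) (hτ : Measurable τ) :
    ∫⁻ z, (∫⁻ w, f w * g (z - τ w) ∂μ) ^ 2 ∂ν ≤ (∫⁻ w, f w ∂μ) ^ 2 * ∫⁻ z, g z ^ 2 ∂ν := by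
  calc ∫⁻ z, (∫⁻ w, f w * g (z - τ w) ∂μ) ^ 2 ∂ν
      ≤ ∫⁻ z, (∫⁻ w, f w ∂μ) * ∫⁻ w, f w * g (z - τ w) ^ 2 ∂μ ∂ν :=
        lintegral_mono fun z => lintegral_mul_sq_le_lintegral_mul_lintegral_mul_sq
          hf.aemeasurable (by fun_prop)
    _ = (∫⁻ w, f w ∂μ) ^ 2 * ∫⁻ z, g z ^ 2 ∂ν := by
        rw [lintegral_const_mul _ (Measurable.lintegral_prod_right (by fun_prop)),
          lintegral_lintegral_mul_comp_sub_eq (h := fun z => g z ^ 2) hf (by fun_prop) hτ, sq,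
          mul_assoc]

end WeightedTranslates

theorem integral_norm_sq_le_toReal {α E : Type*} [MeasurableSpace α] {μ : Measure α}
    [NormedAddCommGroup E] {f : α → E} {M : ℝ≥0∞} (hM : M ≠ ⊤)
    (hf : ∫⁻ a, ‖f a‖ₑ ^ 2 ∂μ ≤ M) :
    ∫ a, ‖f a‖ ^ 2 ∂μ ≤ M.toReal :=
  calc ∫ a, ‖f a‖ ^ 2 ∂μ
      ≤ (∫⁻ a, ENNReal.ofReal ‖‖f a‖ ^ 2‖ ∂μ).toReal :=
        (Real.le_norm_self _).trans (norm_integral_le_lintegral_norm _)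
    _ = (∫⁻ a, ‖f a‖ₑ ^ 2 ∂μ).toReal := by simp_rw [ofReal_norm, enorm_pow, enorm_norm]
    _ ≤ M.toReal := ENNReal.toReal_mono hM hf

theorem integral_norm_sq_eq_toReal {α E : Type*} [MeasurableSpace α] {μ : Measure α}
    [NormedAddCommGroup E] {f : α → E} (hf : AEStronglyMeasurable f μ) :
    ∫ a, ‖f a‖ ^ 2 ∂μ = (∫⁻ a, ‖f a‖ₑ ^ 2 ∂μ).toReal := by
  simpa [enorm_norm] using integral_norm_eq_lintegral_enorm (hf.norm.pow 2)

theorem FT_apply_eq_fourier (hbar : ℝ) (f : ℝ × ℝ → ℂ) (w : ℝ × ℝ) :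
    FT hbar f w = (1 / (2 * π * hbar) : ℂ) *
      𝓕 (f ∘ equivRealProd) ((2 * π * hbar)⁻¹ • conj (equivRealProd.symm w)) := by
  rcases eq_or_ne hbar 0 with rfl | hh
  · simp [FT]
  have hphase (z : ℝ × ℝ) : (-2 * π * inner ℝ (equivRealProd.symm z)
      ((2 * π * hbar)⁻¹ • conj (equivRealProd.symm w)) : ℝ) * I =
      -(I / hbar) * (w.1 * z.1 - w.2 * z.2) := by
    simp [Complex.inner]
    field_simp
  rw [FT, Real.fourier_eq', ← volume_preserving_equiv_real_prod.symm.integral_comp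
    measurableEquivRealProd.symm.measurableEmbedding]
  congr 1
  refine integral_congr_ae (Filter.Eventually.of_forall fun z => ?_)
  change f z * _ = cexp (↑(-2 * π * inner ℝ (equivRealProd.symm z) _) * I) • f z
  rw [hphase, smul_eq_mul, mul_comm]

theorem exists_schwartzMap_eq_FT {hbar : ℝ} (hh : hbar ≠ 0) (Ψ : SchwartzMap (ℝ × ℝ) ℂ) :
    ∃ F : SchwartzMap (ℝ × ℝ) ℂ, FT hbar Ψ = F := by
  let L : (ℝ × ℝ) ≃L[ℝ] ℂ := (equivRealProdCLM.symm.trans conjCLE).trans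
    (ContinuousLinearEquiv.smulLeft (Units.mk0 (2 * π * hbar)⁻¹ (by positivity)))
  let g := SchwartzMap.compCLMOfContinuousLinearEquiv ℝ equivRealProdCLM Ψ
  refine ⟨(1 / (2 * π * hbar) : ℂ) • SchwartzMap.compCLMOfContinuousLinearEquiv ℝ L (𝓕 g), ?_⟩
  ext w
  rw [FT_apply_eq_fourier]
  rfl

theorem enorm_starProd_le (hbar σ : ℝ) (f g : ℝ × ℝ → ℂ) (z : ℝ × ℝ) :
    ‖starProd hbar σ f g z‖ₑ ≤ ‖(1 / (2 * π * hbar) : ℂ)‖ₑ *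
      ∫⁻ w, ‖FT hbar f w‖ₑ * ‖g (z - ((1 - σ) * w.2, σ * w.1))‖ₑ := by
  rw [starProd, enorm_mul]
  gcongr
  refine (enorm_integral_le_lintegral_enorm _).trans (lintegral_mono fun w => ?_)
  have hphase : ‖cexp ((I / hbar) * (w.1 * z.1 - w.2 * z.2))‖ₑ = 1 := by
    simp [enorm_eq_nnnorm, ← NNReal.coe_inj, Complex.norm_exp]
  rw [enorm_mul, hphase, mul_one, enorm_mul]
  rfl

theorem lintegral_enorm_starProd_sq_le (hbar σ : ℝ) {f g : ℝ × ℝ → ℂ}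
    (hf : Measurable (FT hbar f)) (hg : Measurable g) :
    ∫⁻ z, ‖starProd hbar σ f g z‖ₑ ^ 2 ≤
      (‖(1 / (2 * π * hbar) : ℂ)‖ₑ * ∫⁻ w, ‖FT hbar f w‖ₑ) ^ 2 * ∫⁻ z, ‖g z‖ₑ ^ 2 := by
  set K : ℝ≥0∞ := ‖(1 / (2 * π * hbar) : ℂ)‖ₑ
  calc ∫⁻ z, ‖starProd hbar σ f g z‖ₑ ^ 2
      ≤ ∫⁻ z, K ^ 2 * (∫⁻ w, ‖FT hbar f w‖ₑ * ‖g (z - ((1 - σ) * w.2, σ * w.1))‖ₑ) ^ 2 :=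
        lintegral_mono fun z => by
          rw [← mul_pow]
          gcongr
          exact enorm_starProd_le hbar σ f g z
    _ = K ^ 2 * ∫⁻ z, (∫⁻ w, ‖FT hbar f w‖ₑ * ‖g (z - ((1 - σ) * w.2, σ * w.1))‖ₑ) ^ 2 :=
        lintegral_const_mul' _ _ (by finiteness)
    _ ≤ K ^ 2 * ((∫⁻ w, ‖FT hbar f w‖ₑ) ^ 2 * ∫⁻ z, ‖g z‖ₑ ^ 2) := by
        gcongr
        exact lintegral_sq_lintegral_mul_comp_sub_le (by fun_prop) (by fun_prop) (by fun_prop)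
    _ = (K * ∫⁻ w, ‖FT hbar f w‖ₑ) ^ 2 * ∫⁻ z, ‖g z‖ₑ ^ 2 := by ring

/-- `‖Ψ ⋆_σ Φ‖_{L²} ≤ (1/(2πħ)) ‖FΨ‖_{L¹} ‖Φ‖_{L²}` for Schwartz functions on `ℝ²`. -/
theorem stmt_7 (hbar σ : ℝ) (hh : 0 < hbar) (Ψ Φ : SchwartzMap (ℝ × ℝ) ℂ) :
    Real.sqrt (∫ z : ℝ × ℝ, ‖starProd hbar σ (⇑Ψ) (⇑Φ) z‖ ^ 2) ≤
      (1 / (2 * π * hbar)) * (∫ w : ℝ × ℝ, ‖FT hbar (⇑Ψ) w‖) *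
        Real.sqrt (∫ z : ℝ × ℝ, ‖Φ z‖ ^ 2) := by
  obtain ⟨F, hF⟩ := exists_schwartzMap_eq_FT hh.ne' Ψ
  have hL2 := lintegral_enorm_starProd_sq_le hbar σ (hF ▸ F.continuous.measurable)
    Φ.continuous.measurable
  have hFΨ : ∫⁻ w, ‖FT hbar Ψ w‖ₑ ≠ ⊤ := hF ▸ F.integrable.2.ne
  have hΦ : ∫⁻ z, ‖Φ z‖ₑ ^ 2 ≠ ⊤ := by
    simpa [enorm_norm] using ((Φ.memLp 2).integrable_norm_pow two_ne_zero).2.ne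
  have hK : (‖(1 / (2 * π * hbar) : ℂ)‖ₑ).toReal = 1 / (2 * π * hbar) := by
    rw [toReal_enorm, norm_div, norm_one, norm_mul, norm_mul, Complex.norm_two,
      Complex.norm_real, Complex.norm_real, Real.norm_of_nonneg pi_pos.le,
      Real.norm_of_nonneg hh.le]
  calc Real.sqrt (∫ z, ‖starProd hbar σ Ψ Φ z‖ ^ 2)
      ≤ Real.sqrt (((‖(1 / (2 * π * hbar) : ℂ)‖ₑ * ∫⁻ w, ‖FT hbar Ψ w‖ₑ) ^ 2 *
          ∫⁻ z, ‖Φ z‖ₑ ^ 2).toReal) :=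
        Real.sqrt_le_sqrt (integral_norm_sq_le_toReal (by finiteness) hL2)
    _ = _ := by
        rw [ENNReal.toReal_mul, ENNReal.toReal_pow, Real.sqrt_mul' _ ENNReal.toReal_nonneg,
          Real.sqrt_sq ENNReal.toReal_nonneg, ENNReal.toReal_mul, hK,
          integral_norm_eq_lintegral_enorm (hF ▸ F.continuous.aestronglyMeasurable),
          integral_norm_sq_eq_toReal Φ.continuous.aestronglyMeasurable]
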